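/- Let Σ₀, Σ₁ be symmetric positive definite, μ₀, μ₁ ∈ ℝⁿ, A = log(Σ₀^{-1/2}(Σ₀^{1/2} Σ₁ Σ₀^{1/2})^{1/2} Σ₀^{-1/2}), b = ((e^{A} − I) A⁺ + P_A)^{-1}(μ₁ − e^{A} μ₀), M = 2A e^{2A} − e^{2A} + I, R = e^{A}, and Q = (R − I)⁺ (log(R²) R² − R² + I) (R − I)⁺. Then (μ₀ + A⁺ b)ᵀ M (μ₀ + A⁺ b) = ‖√Q (μ₁ − μ₀)‖². -/

import Mathlib

open Matrix MeasureTheory ProbabilityTheory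
open scoped Classical

noncomputable section

/-- Moore–Penrose pseudoinverse `A⁺` of a real square matrix: the unique `B` with
`A B A = A`, `B A B = B`, and `A B`, `B A` symmetric. -/
def pinv {n : ℕ} (A : Matrix (Fin n) (Fin n) ℝ) : Matrix (Fin n) (Fin n) ℝ :=
  if h : ∃ B : Matrix (Fin n) (Fin n) ℝ,
      A * B * A = A ∧ B * A * B = B ∧ (A * B)ᵀ = A * B ∧ (B * A)ᵀ = B * A
  then h.choose else 0

/-- `P_A = I - A A⁺`, the orthogonal projection onto the null space of `A`. -/
def nullProj {n : ℕ} (A : Matrix (Fin n) (Fin n) ℝ) : Matrix (Fin n) (Fin n) ℝ :=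
  1 - A * pinv A

/-- The matrix exponential `e^A`. -/
def mexp {n : ℕ} (A : Matrix (Fin n) (Fin n) ℝ) : Matrix (Fin n) (Fin n) ℝ :=
  NormedSpace.exp A

/-- The (symmetric) positive semidefinite square root of a positive semidefinite matrix
(junk value `0` if no such root exists). -/
def msqrt {n : ℕ} (S : Matrix (Fin n) (Fin n) ℝ) : Matrix (Fin n) (Fin n) ℝ :=
  if h : ∃ B : Matrix (Fin n) (Fin n) ℝ, B.PosSemidef ∧ B * B = S then h.choose else 0

/-- The matrix logarithm of a symmetric positive definite matrix: the unique symmetric `A`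
with `e^A = S` (junk value `0` if no such `A` exists). -/
def matLog {n : ℕ} (S : Matrix (Fin n) (Fin n) ℝ) : Matrix (Fin n) (Fin n) ℝ :=
  if h : ∃ A : Matrix (Fin n) (Fin n) ℝ, A.IsSymm ∧ mexp A = S then h.choose else 0

/-- The quadratic potential `f(x) = ½ xᵀ A x + bᵀ x`. -/
def quadf {n : ℕ} (A : Matrix (Fin n) (Fin n) ℝ) (b x : Fin n → ℝ) : ℝ :=
  (1 / 2) * (x ⬝ᵥ (A *ᵥ x)) + b ⬝ᵥ x

/-- Squared Euclidean norm `‖v‖²` on `ℝⁿ`. -/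
def sqNorm {n : ℕ} (v : Fin n → ℝ) : ℝ := ∑ i, (v i) ^ 2

/-- Squared Frobenius norm `‖M‖_F²`. -/
def frobSq {n : ℕ} (M : Matrix (Fin n) (Fin n) ℝ) : ℝ := ∑ i, ∑ j, (M i j) ^ 2

/-- The flow map `φ : (t, x₀) ↦ x(t)` of the ODE `ẋ = A x + b`, `x(0) = x₀`. -/
def flowMap {n : ℕ} (A : Matrix (Fin n) (Fin n) ℝ) (b : Fin n → ℝ) :
    ℝ → (Fin n → ℝ) → (Fin n → ℝ) :=
  if h : ∃ φ : ℝ → (Fin n → ℝ) → (Fin n → ℝ),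
      (∀ x₀, φ 0 x₀ = x₀) ∧ ∀ x₀ t, HasDerivAt (fun s => φ s x₀) (A *ᵥ (φ t x₀) + b) t
  then h.choose else fun _ x => x

/-- The standard Gaussian measure on `ℝⁿ`. -/
def stdGaussianPi (n : ℕ) : Measure (Fin n → ℝ) :=
  Measure.pi fun _ => gaussianReal 0 1

/-- The multivariate Gaussian measure `N(μ, Σ)` on `ℝⁿ` (for `Σ` positive semidefinite),
realized as the pushforward of the standard Gaussian by `x ↦ μ + √Σ x`. -/
def multiGaussian {n : ℕ} (μ : Fin n → ℝ) (S : Matrix (Fin n) (Fin n) ℝ) :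
    Measure (Fin n → ℝ) :=
  (stdGaussianPi n).map (fun x => μ + (msqrt S) *ᵥ x)

/-- The Wasserstein KL-divergence `D_WKL(μ‖ν)`: for the quadratic potential
`f(x) = ½ xᵀ A x + bᵀ x` (`A` symmetric) whose gradient flow `φ` pushes `μ` forward to `ν`
at time 1, it is `∫ ∫₀¹ (f(φ₁ x) - f(φ_t x)) dt dμ(x)` (junk value `0` if no such `f`). -/
def DWKL {n : ℕ} (μ ν : Measure (Fin n → ℝ)) : ℝ :=
  if h : ∃ p : Matrix (Fin n) (Fin n) ℝ × (Fin n → ℝ),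
      p.1.IsSymm ∧ μ.map (flowMap p.1 p.2 1) = ν then
    ∫ x, (∫ t in (0:ℝ)..1,
        (quadf h.choose.1 h.choose.2 (flowMap h.choose.1 h.choose.2 1 x)
          - quadf h.choose.1 h.choose.2 (flowMap h.choose.1 h.choose.2 t x))) ∂μ
  else 0

/-- The flow map of the one-dimensional ODE `ẋ = a x + b`. -/
def flow1 (a b : ℝ) : ℝ → ℝ → ℝ :=
  if h : ∃ φ : ℝ → ℝ → ℝ,
      (∀ x₀, φ 0 x₀ = x₀) ∧ ∀ x₀ t, HasDerivAt (fun s => φ s x₀) (a * φ t x₀ + b) t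
  then h.choose else fun _ x => x

/-- The quadratic potential `f(x) = ½ a x² + b x` on `ℝ`. -/
def quad1 (a b x : ℝ) : ℝ := (1 / 2) * a * x ^ 2 + b * x

/-- The Wasserstein KL-divergence for measures on `ℝ`. -/
def DWKL1 (μ ν : Measure ℝ) : ℝ :=
  if h : ∃ p : ℝ × ℝ, μ.map (flow1 p.1 p.2 1) = ν then
    ∫ x, (∫ t in (0:ℝ)..1,
        (quad1 h.choose.1 h.choose.2 (flow1 h.choose.1 h.choose.2 1 x)
          - quad1 h.choose.1 h.choose.2 (flow1 h.choose.1 h.choose.2 t x))) ∂μ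
  else 0

end

/-!
Everything in the statement is a function of the single symmetric matrix `A` (a matrix
logarithm), so it reduces, through the functional calculus of `A`, to scalar identities on its
eigenvalues. There `A⁺ ((e^A - I) A⁺ + P_A)⁻¹ = (e^A - I)⁺`, and `M` vanishes at the eigenvalue
`0`, where `e^A - I` does, so `M (μ₀ + A⁺ b) = M (R - I)⁺ (μ₁ - μ₀)`. As `log (R²) = 2A`, the
middle factor of `Q` is `M`, i.e. `Q = (R - I)⁺ M (R - I)⁺`, and `M ≥ 0` because
`e^{-2x} ≥ 1 - 2x`; hence both sides equal `(μ₁ - μ₀)ᵀ Q (μ₁ - μ₀)`.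
-/

open scoped MatrixOrder

namespace IsSelfAdjoint

section RCLike

variable {ι 𝕜 : Type*} [RCLike 𝕜] [Fintype ι] [DecidableEq ι] {A : Matrix ι ι 𝕜}

/-- The spectrum of a matrix is finite, so every `f : ℝ → ℝ` is continuous on it and `f ↦ f(A)`
is an algebra homomorphism on all of `ℝ → ℝ`. -/
noncomputable def matrixCfcHom (hA : IsSelfAdjoint A) : (ℝ → ℝ) →ₐ[ℝ] Matrix ι ι 𝕜 where
  toFun f := cfc f A
  map_one' := cfc_one ℝ A
  map_mul' f g := cfc_mul f g A (A.finite_real_spectrum.continuousOn f)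
    (A.finite_real_spectrum.continuousOn g)
  map_zero' := cfc_zero ℝ A
  map_add' f g := cfc_add A f g (A.finite_real_spectrum.continuousOn f)
    (A.finite_real_spectrum.continuousOn g)
  commutes' r := cfc_const r A

variable (hA : IsSelfAdjoint A)
include hA

theorem matrixCfcHom_apply (f : ℝ → ℝ) : hA.matrixCfcHom f = cfc f A := rfl

theorem matrixCfcHom_id : hA.matrixCfcHom id = A := cfc_id ℝ A

theorem inv_matrixCfcHom {f : ℝ → ℝ} (hf : ∀ x ∈ spectrum ℝ A, f x ≠ 0) :
    (hA.matrixCfcHom f)⁻¹ = hA.matrixCfcHom f⁻¹ := by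
  refine inv_eq_right_inv ?_
  rw [← map_mul, ← map_one hA.matrixCfcHom]
  exact cfc_congr fun x hx => mul_inv_cancel₀ (hf x hx)

end RCLike

section Real

variable {ι : Type*} [Fintype ι] [DecidableEq ι] {A : Matrix ι ι ℝ} (hA : IsSelfAdjoint A)
include hA

theorem transpose_matrixCfcHom (f : ℝ → ℝ) : (hA.matrixCfcHom f)ᵀ = hA.matrixCfcHom f :=
  (isHermitian_iff_isSymm.mp (cfc_predicate f A)).eq

theorem posSemidef_matrixCfcHom {f : ℝ → ℝ} (hf : ∀ x ∈ spectrum ℝ A, 0 ≤ f x) :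
    (hA.matrixCfcHom f).PosSemidef :=
  (cfc_nonneg hf).posSemidef

end Real

end IsSelfAdjoint

section MoorePenrose

variable {m k R : Type*} [Fintype m] [Fintype k] [CommRing R]

def IsMoorePenroseInverse (A : Matrix m k R) (B : Matrix k m R) : Prop :=
  A * B * A = A ∧ B * A * B = B ∧ (A * B)ᵀ = A * B ∧ (B * A)ᵀ = B * A

variable {A : Matrix m k R} {B C : Matrix k m R}

theorem IsMoorePenroseInverse.transpose (h : IsMoorePenroseInverse A B) :
    IsMoorePenroseInverse Aᵀ Bᵀ := by
  obtain ⟨h₁, h₂, h₃, h₄⟩ := h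
  refine ⟨?_, ?_, ?_, ?_⟩
  · rw [← transpose_mul, ← transpose_mul, ← Matrix.mul_assoc, h₁]
  · rw [← transpose_mul, ← transpose_mul, ← Matrix.mul_assoc, h₂]
  · rw [← transpose_mul, transpose_transpose, h₄]
  · rw [← transpose_mul, transpose_transpose, h₃]

theorem IsMoorePenroseInverse.mul_eq (hB : IsMoorePenroseInverse A B)
    (hC : IsMoorePenroseInverse A C) : A * B = A * C :=
  calc A * B = (A * B)ᵀ := hB.2.2.1.symm
    _ = (A * C * A * B)ᵀ := by rw [hC.1]
    _ = (A * B)ᵀ * (A * C)ᵀ := by simp only [transpose_mul, Matrix.mul_assoc]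
    _ = A * B * (A * C) := by rw [hB.2.2.1, hC.2.2.1]
    _ = A * C := by rw [← Matrix.mul_assoc, hB.1]

theorem IsMoorePenroseInverse.unique (hB : IsMoorePenroseInverse A B)
    (hC : IsMoorePenroseInverse A C) : B = C := by
  have hBA : B * A = C * A := by
    simpa only [transpose_mul, transpose_transpose] using
      congrArg Matrix.transpose (hB.transpose.mul_eq hC.transpose)
  calc B = B * A * B := hB.2.1.symm
    _ = C * A * C := by rw [Matrix.mul_assoc, hB.mul_eq hC, ← Matrix.mul_assoc, hBA]
    _ = C := hC.2.1

end MoorePenrose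

theorem Matrix.dotProduct_mulVec_eq_of_mulVec_eq {ι R : Type*} [Fintype ι] [CommSemiring R]
    {M P : Matrix ι ι R} {v w : ι → R} (hM : Mᵀ = M) (hP : Pᵀ = P)
    (h : M *ᵥ v = M *ᵥ (P *ᵥ w)) : v ⬝ᵥ (M *ᵥ v) = w ⬝ᵥ ((P * M * P) *ᵥ w) :=
  calc v ⬝ᵥ (M *ᵥ v) = (M *ᵥ v) ⬝ᵥ (P *ᵥ w) := by
        rw [h, dotProduct_mulVec, ← mulVec_transpose, hM, ← h]
    _ = w ⬝ᵥ ((P * M * P) *ᵥ w) := by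
        rw [h, ← mulVec_mulVec, ← mulVec_mulVec, dotProduct_mulVec w P, ← mulVec_transpose, hP,
          dotProduct_comm]

section RealSquareMatrix

variable {n : ℕ}

theorem pinv_eq_of_isMoorePenroseInverse {A B : Matrix (Fin n) (Fin n) ℝ}
    (h : IsMoorePenroseInverse A B) : pinv A = B := by
  have hex : ∃ B, IsMoorePenroseInverse A B := ⟨B, h⟩
  rw [pinv]
  exact (dif_pos hex).trans (hex.choose_spec.unique h)

-- With the convention `0⁻¹ = 0`, `x ↦ x⁻¹` is the scalar pseudoinverse.
theorem pinv_matrixCfcHom {A : Matrix (Fin n) (Fin n) ℝ} (hA : IsSelfAdjoint A) (f : ℝ → ℝ) :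
    pinv (hA.matrixCfcHom f) = hA.matrixCfcHom f⁻¹ := by
  apply pinv_eq_of_isMoorePenroseInverse
  refine ⟨?_, ?_, ?_, ?_⟩ <;> simp only [← map_mul, hA.transpose_matrixCfcHom]
  · exact congrArg _ (funext fun x => mul_inv_mul_cancel (f x))
  · exact congrArg _ (funext fun x => by simpa using mul_inv_mul_cancel (f x)⁻¹)

theorem mexp_two_smul (A : Matrix (Fin n) (Fin n) ℝ) : mexp ((2 : ℝ) • A) = mexp A * mexp A := by
  rw [two_smul, mexp, mexp, exp_add_of_commute A A (Commute.refl A)]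

theorem mexp_eq_matrixCfcHom {A : Matrix (Fin n) (Fin n) ℝ} (hA : IsSelfAdjoint A) :
    mexp A = hA.matrixCfcHom Real.exp := by
  have hH : A.IsHermitian := hA
  rw [hA.matrixCfcHom_apply, hH.cfc_eq, IsHermitian.cfc, mexp]
  conv_lhs => rw [hH.spectral_theorem]
  rw [Unitary.conjStarAlgAut_apply, Unitary.conjStarAlgAut_apply]
  set U := hH.eigenvectorUnitary
  have hU : ((U : Matrix (Fin n) (Fin n) ℝ))⁻¹ = star (U : Matrix (Fin n) (Fin n) ℝ) :=
    inv_eq_left_inv (Unitary.coe_star_mul_self U)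
  rw [← hU, exp_conj (U : Matrix (Fin n) (Fin n) ℝ) _ ⟨Unitary.toUnits U, rfl⟩, exp_diagonal]
  congr 3
  ext i
  simp [Real.exp_eq_exp_ℝ]

theorem eq_cfc_log_mexp {A : Matrix (Fin n) (Fin n) ℝ} (hA : IsSelfAdjoint A) :
    A = cfc Real.log (mexp A) := by
  rw [mexp_eq_matrixCfcHom hA, hA.matrixCfcHom_apply,
    ← cfc_comp Real.log Real.exp A hA ((A.finite_real_spectrum.image _).continuousOn _)]
  conv_lhs => rw [← cfc_id' ℝ A]
  exact cfc_congr fun x _ => (Real.log_exp x).symm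

theorem matLog_isSelfAdjoint (S : Matrix (Fin n) (Fin n) ℝ) : IsSelfAdjoint (matLog S) := by
  rw [matLog]
  split_ifs with hex
  · exact isHermitian_iff_isSymm.mpr hex.choose_spec.1
  · exact .zero _

theorem matLog_mexp {L : Matrix (Fin n) (Fin n) ℝ} (hL : IsSelfAdjoint L) :
    matLog (mexp L) = L := by
  have hex : ∃ K : Matrix (Fin n) (Fin n) ℝ, K.IsSymm ∧ mexp K = mexp L :=
    ⟨L, isHermitian_iff_isSymm.mp hL, rfl⟩
  obtain ⟨hK, hKL⟩ := hex.choose_spec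
  rw [matLog, dif_pos hex, eq_cfc_log_mexp (isHermitian_iff_isSymm.mpr hK), hKL,
    ← eq_cfc_log_mexp hL]

theorem sqNorm_msqrt_mulVec {Q : Matrix (Fin n) (Fin n) ℝ} (hQ : Q.PosSemidef) (v : Fin n → ℝ) :
    sqNorm (msqrt Q *ᵥ v) = v ⬝ᵥ (Q *ᵥ v) := by
  have hex : ∃ B : Matrix (Fin n) (Fin n) ℝ, B.PosSemidef ∧ B * B = Q :=
    ⟨CFC.sqrt Q, (CFC.sqrt_nonneg Q).posSemidef, CFC.sqrt_mul_sqrt_self Q hQ.nonneg⟩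
  obtain ⟨hB, hBB⟩ : (msqrt Q).PosSemidef ∧ msqrt Q * msqrt Q = Q := by
    rw [msqrt, dif_pos hex]; exact hex.choose_spec
  have hBt : (msqrt Q)ᵀ = msqrt Q := (isHermitian_iff_isSymm.mp hB.1).eq
  calc sqNorm (msqrt Q *ᵥ v) = (msqrt Q *ᵥ v) ⬝ᵥ (msqrt Q *ᵥ v) := by
        simp only [sqNorm, dotProduct, sq]
    _ = v ⬝ᵥ (Q *ᵥ v) := by
        rw [dotProduct_mulVec, ← mulVec_transpose, hBt, mulVec_mulVec, hBB, dotProduct_comm]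

noncomputable def meanWeight (A : Matrix (Fin n) (Fin n) ℝ) : Matrix (Fin n) (Fin n) ℝ :=
  (2 : ℝ) • (A * mexp ((2 : ℝ) • A)) - mexp ((2 : ℝ) • A) + 1

variable {A : Matrix (Fin n) (Fin n) ℝ} (hA : IsSelfAdjoint A)
include hA

theorem pinv_eq_matrixCfcHom : pinv A = hA.matrixCfcHom id⁻¹ := by
  rw [← pinv_matrixCfcHom, hA.matrixCfcHom_id]

theorem pinv_mexp_sub_one_eq_matrixCfcHom :
    pinv (mexp A - 1) = hA.matrixCfcHom (Real.exp - 1)⁻¹ := by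
  rw [mexp_eq_matrixCfcHom hA, ← map_one hA.matrixCfcHom, ← map_sub, pinv_matrixCfcHom]

theorem pinv_mul_inv_eq_pinv_mexp_sub_one :
    pinv A * ((mexp A - 1) * pinv A + nullProj A)⁻¹ = pinv (mexp A - 1) := by
  have hC : (mexp A - 1) * pinv A + nullProj A =
      hA.matrixCfcHom ((Real.exp - 1) * id⁻¹ + (1 - id * id⁻¹)) := by
    simp only [map_add, map_mul, map_sub, map_one, hA.matrixCfcHom_id, ← pinv_eq_matrixCfcHom hA,
      ← mexp_eq_matrixCfcHom hA, nullProj]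
  have hC_ne : ∀ x : ℝ, (Real.exp x - 1) * x⁻¹ + (1 - x * x⁻¹) ≠ 0 := by
    intro x
    rcases eq_or_ne x 0 with rfl | hx
    · simp
    · rw [mul_inv_cancel₀ hx, sub_self, add_zero]
      exact mul_ne_zero (sub_ne_zero.mpr ((Real.exp_eq_one_iff x).not.mpr hx)) (inv_ne_zero hx)
  have hcoeff : ∀ x : ℝ,
      x⁻¹ * ((Real.exp x - 1) * x⁻¹ + (1 - x * x⁻¹))⁻¹ = (Real.exp x - 1)⁻¹ := by
    intro x
    rcases eq_or_ne x 0 with rfl | hx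
    · simp
    · rw [mul_inv_cancel₀ hx, sub_self, add_zero, mul_inv, inv_inv, mul_left_comm,
        inv_mul_cancel₀ hx, mul_one]
  rw [hC, hA.inv_matrixCfcHom (f := (Real.exp - 1) * id⁻¹ + (1 - id * id⁻¹)) fun x _ => hC_ne x,
    pinv_eq_matrixCfcHom hA, ← map_mul, pinv_mexp_sub_one_eq_matrixCfcHom hA]
  exact congrArg _ (funext hcoeff)

theorem meanWeight_eq_matrixCfcHom :
    meanWeight A =
      hA.matrixCfcHom ((2 : ℝ) • (id * (Real.exp * Real.exp)) - Real.exp * Real.exp + 1) := by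
  simp only [meanWeight, map_add, map_mul, map_sub, map_one, map_smul, hA.matrixCfcHom_id,
    ← mexp_eq_matrixCfcHom hA, mexp_two_smul]

theorem posSemidef_meanWeight : (meanWeight A).PosSemidef := by
  rw [meanWeight_eq_matrixCfcHom hA]
  refine hA.posSemidef_matrixCfcHom fun x _ => ?_
  have h : (1 - 2 * x) * Real.exp (2 * x) ≤ 1 := by
    have := mul_le_mul_of_nonneg_right (Real.add_one_le_exp (-(2 * x))) (Real.exp_pos (2 * x)).le
    rwa [← Real.exp_add, neg_add_cancel, Real.exp_zero, add_comm, ← sub_eq_add_neg] at this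
  change 0 ≤ (2 : ℝ) • (x * (Real.exp x * Real.exp x)) - Real.exp x * Real.exp x + 1
  rw [smul_eq_mul, ← Real.exp_add, ← two_mul]
  linarith

-- The weight `2x e^{2x} - e^{2x} + 1` vanishes at `x = 0`, the one eigenvalue at which
-- `e^x - 1` is not invertible.
theorem meanWeight_mul_pinv_mexp_sub_one_mul :
    meanWeight A * (pinv (mexp A - 1) * (mexp A - 1)) = meanWeight A := by
  rw [meanWeight_eq_matrixCfcHom hA, pinv_mexp_sub_one_eq_matrixCfcHom hA,
    mexp_eq_matrixCfcHom hA, ← map_one hA.matrixCfcHom, ← map_sub, ← map_mul, ← map_mul]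
  refine congrArg _ (funext fun x => ?_)
  rcases eq_or_ne x 0 with rfl | hx
  · simp
  · change _ * ((Real.exp x - 1)⁻¹ * (Real.exp x - 1)) = _
    rw [inv_mul_cancel₀ (sub_ne_zero.mpr ((Real.exp_eq_one_iff x).not.mpr hx)), mul_one]

theorem meanWeight_mulVec_add_pinv_mulVec (μ₀ μ₁ : Fin n → ℝ) :
    meanWeight A *ᵥ (μ₀ + pinv A *ᵥ (((mexp A - 1) * pinv A + nullProj A)⁻¹ *ᵥ
        (μ₁ - mexp A *ᵥ μ₀))) = meanWeight A *ᵥ (pinv (mexp A - 1) *ᵥ (μ₁ - μ₀)) := by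
  rw [mulVec_mulVec, pinv_mul_inv_eq_pinv_mexp_sub_one hA]
  calc meanWeight A *ᵥ (μ₀ + pinv (mexp A - 1) *ᵥ (μ₁ - mexp A *ᵥ μ₀))
      = meanWeight A *ᵥ (pinv (mexp A - 1) *ᵥ (μ₁ - μ₀)) +
          (meanWeight A - meanWeight A * (pinv (mexp A - 1) * (mexp A - 1))) *ᵥ μ₀ := by
        simp only [mulVec_add, mulVec_sub, sub_mulVec, mulVec_mulVec, Matrix.mul_sub,
          Matrix.mul_one]
        abel
    _ = meanWeight A *ᵥ (pinv (mexp A - 1) *ᵥ (μ₁ - μ₀)) := by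
        rw [meanWeight_mul_pinv_mexp_sub_one_mul hA, sub_self, zero_mulVec, add_zero]

end RealSquareMatrix

theorem stmt12_general {n : ℕ} (μ₀ μ₁ : Fin n → ℝ) (S₀ S₁ : Matrix (Fin n) (Fin n) ℝ)
    (A : Matrix (Fin n) (Fin n) ℝ)
    (hA : A = matLog ((msqrt S₀)⁻¹ * msqrt (msqrt S₀ * S₁ * msqrt S₀) * (msqrt S₀)⁻¹))
    (b : Fin n → ℝ)
    (hb : b = ((mexp A - 1) * pinv A + nullProj A)⁻¹ *ᵥ (μ₁ - mexp A *ᵥ μ₀))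
    (M : Matrix (Fin n) (Fin n) ℝ)
    (hM : M = (2 : ℝ) • (A * mexp ((2 : ℝ) • A)) - mexp ((2 : ℝ) • A) + 1)
    (R : Matrix (Fin n) (Fin n) ℝ) (hR : R = mexp A)
    (Q : Matrix (Fin n) (Fin n) ℝ)
    (hQ : Q = pinv (R - 1) * (matLog (R * R) * (R * R) - R * R + 1) * pinv (R - 1)) :
    (μ₀ + pinv A *ᵥ b) ⬝ᵥ (M *ᵥ (μ₀ + pinv A *ᵥ b)) = sqNorm (msqrt Q *ᵥ (μ₁ - μ₀)) := by
  have hAsa : IsSelfAdjoint A := hA ▸ matLog_isSelfAdjoint _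
  change M = meanWeight A at hM
  subst hM hR hb
  have hM : (meanWeight A).PosSemidef := posSemidef_meanWeight hAsa
  have hP : (pinv (mexp A - 1))ᵀ = pinv (mexp A - 1) := by
    rw [pinv_mexp_sub_one_eq_matrixCfcHom hAsa, hAsa.transpose_matrixCfcHom]
  have hQ' : Q = pinv (mexp A - 1) * meanWeight A * pinv (mexp A - 1) := by
    rw [hQ, ← mexp_two_smul, matLog_mexp ((IsSelfAdjoint.all (2 : ℝ)).smul hAsa), meanWeight,
      smul_mul_assoc]
  rw [hQ', sqNorm_msqrt_mulVec (by
    simpa only [conjTranspose_eq_transpose_of_trivial, hP] using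
      hM.conjTranspose_mul_mul_same (pinv (mexp A - 1)))]
  exact dotProduct_mulVec_eq_of_mulVec_eq (isHermitian_iff_isSymm.mp hM.1).eq hP
    (meanWeight_mulVec_add_pinv_mulVec hAsa μ₀ μ₁)

/-- The mean term: `(μ₀ + A⁺b)ᵀ M (μ₀ + A⁺b) = ‖√Q (μ₁ − μ₀)‖²`. -/
theorem stmt12 {n : ℕ} (μ₀ μ₁ : Fin n → ℝ) (S₀ S₁ : Matrix (Fin n) (Fin n) ℝ)
    (h₀ : S₀.PosDef) (h₁ : S₁.PosDef) (A : Matrix (Fin n) (Fin n) ℝ)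
    (hA : A = matLog ((msqrt S₀)⁻¹ * msqrt (msqrt S₀ * S₁ * msqrt S₀) * (msqrt S₀)⁻¹))
    (b : Fin n → ℝ)
    (hb : b = ((mexp A - 1) * pinv A + nullProj A)⁻¹ *ᵥ (μ₁ - mexp A *ᵥ μ₀))
    (M : Matrix (Fin n) (Fin n) ℝ)
    (hM : M = (2 : ℝ) • (A * mexp ((2 : ℝ) • A)) - mexp ((2 : ℝ) • A) + 1)
    (R : Matrix (Fin n) (Fin n) ℝ) (hR : R = mexp A)
    (Q : Matrix (Fin n) (Fin n) ℝ)
    (hQ : Q = pinv (R - 1) * (matLog (R * R) * (R * R) - R * R + 1) * pinv (R - 1)) :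
    (μ₀ + pinv A *ᵥ b) ⬝ᵥ (M *ᵥ (μ₀ + pinv A *ᵥ b)) = sqNorm (msqrt Q *ᵥ (μ₁ - μ₀)) :=
  stmt12_general μ₀ μ₁ S₀ S₁ A hA b hb M hM R hR Q hQ
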